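/- For all l, m, n ∈ ℤ, in A: [L_{1/2,l}^{(−1)^l}, L_{1/2,m}^{(−1)^m}, L_{1/2,n}^{(−1)^n}] = (1/2) · D · L_{1/2, l+m+n−1}^{(−1)^{l+m+n−1}}, where D is the determinant of the 3×3 matrix with rows ((−1)^l, (−1)^m, (−1)^n), (1, 1, 1), (l, m, n). (In particular, whenever the superscript (−1)^l + (−1)^m + (−1)^n produced by the bracket differs from (−1)^{l+m+n−1}, the determinant D vanishes.) Hence the simple 3-Lie algebra A_ω, with basis {U_n : n ∈ ℤ} and bracket [U_l, U_m, U_n] = D·U_{l+m+n−1}, embeds into (A, [·,·,·]) via U_r ↦ √2 · L_{1/2,r}^{(−1)^r} when F contains √2. -/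

import Mathlib

noncomputable section

/-- The half-integers `½ℤ = {k/2 : k ∈ ℤ}` as an additive subgroup of `ℚ`. -/
def HalfInt : AddSubgroup ℚ where
  carrier := {q | ∃ k : ℤ, q = k / 2}
  add_mem' := by rintro a b ⟨k, rfl⟩ ⟨j, rfl⟩; exact ⟨k + j, by push_cast; ring⟩
  zero_mem' := ⟨0, by norm_num⟩
  neg_mem' := by rintro a ⟨k, rfl⟩; exact ⟨-k, by push_cast; ring⟩

/-- The half-integer `k/2`. -/
def hh (k : ℤ) : HalfInt := ⟨(k : ℚ) / 2, ⟨k, rfl⟩⟩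

variable (F : Type*) [Field F] [CharZero F]

/-- `A` is the group algebra of `(½ℤ)³` over `F`; the basis element indexed by
`(l, m, r)` is `L_{l,m}^r`. -/
abbrev A := AddMonoidAlgebra F (HalfInt × HalfInt × HalfInt)

/-- The basis element `L_{l,m}^r` of `A`. -/
def L (l m r : HalfInt) : A F := AddMonoidAlgebra.single (l, m, r) 1

/-- `M(α₁,α₂,α₃)`: the determinant of the 3×3 matrix with rows `(r₁,r₂,r₃)`,
`(l₁,l₂,l₃)`, `(m₁,m₂,m₃)`, computed in `ℚ` and mapped into `F`.
Here an index `α = (l, m, r)`. -/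
def Mdet (α β γ : HalfInt × HalfInt × HalfInt) : F :=
  ((Matrix.det !![(α.2.2 : ℚ), (β.2.2 : ℚ), (γ.2.2 : ℚ);
                  (α.1 : ℚ),   (β.1 : ℚ),   (γ.1 : ℚ);
                  (α.2.1 : ℚ), (β.2.1 : ℚ), (γ.2.1 : ℚ)] : ℚ) : F)

/-- The shift `ν = (1, 1, 0)` (in coordinates `(l, m, r)`). -/
def nu : HalfInt × HalfInt × HalfInt := (hh 2, hh 2, hh 0)

/-- The alternating trilinear bracket on `A`, determined on basis elements by
`[L_{l₁,m₁}^{r₁}, L_{l₂,m₂}^{r₂}, L_{l₃,m₃}^{r₃}]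
  = M(α₁,α₂,α₃) · L_{l₁+l₂+l₃-1, m₁+m₂+m₃-1}^{r₁+r₂+r₃}`. -/
def bracket (x y z : A F) : A F :=
  Finsupp.sum x.coeff fun α a => Finsupp.sum y.coeff fun β b => Finsupp.sum z.coeff fun γ c =>
    AddMonoidAlgebra.single (α + β + γ - nu) (a * b * c * Mdet F α β γ)

/-!
On basis elements the bracket is again a multiple of a single basis element, and for the
indices `(1/2, l, (−1)^l)` the coefficient `M` is `D/2`. The third index component of the
bracket is `(−1)^l + (−1)^m + (−1)^n`; three signs either sum to minus their product, which is
`(−1)^(l+m+n−1)`, or all agree, and then the first row of `D` is a multiple of `(1, 1, 1)`, so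
`D = 0` and both sides vanish. The statement for `√2 · L` follows by trilinearity, since
`(√2)³ / 2 = √2`.
-/

lemma hh_add (a b : ℤ) : hh a + hh b = hh (a + b) :=
  Subtype.ext (by simp only [hh, AddSubgroup.coe_add]; push_cast; ring)

lemma hh_sub (a b : ℤ) : hh a - hh b = hh (a - b) :=
  Subtype.ext (by simp only [hh, AddSubgroup.coe_sub]; push_cast; ring)

section Bracket

variable {F}
omit [CharZero F]

lemma bracket_smul (a b c : F) (x y z : A F) :
    bracket F (a • x) (b • y) (c • z) = (a * b * c) • bracket F x y z := by
  simp only [bracket, AddMonoidAlgebra.coeff_smul]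
  rw [Finsupp.sum_smul_index (by simp), Finsupp.smul_sum]
  refine Finsupp.sum_congr fun α _ => ?_
  rw [Finsupp.sum_smul_index (by simp), Finsupp.smul_sum]
  refine Finsupp.sum_congr fun β _ => ?_
  rw [Finsupp.sum_smul_index (by simp), Finsupp.smul_sum]
  refine Finsupp.sum_congr fun γ _ => ?_
  rw [AddMonoidAlgebra.smul_single']
  congr 1
  ring

lemma bracket_single (α β γ : HalfInt × HalfInt × HalfInt) (a b c : F) :
    bracket F (AddMonoidAlgebra.single α a) (AddMonoidAlgebra.single β b)
        (AddMonoidAlgebra.single γ c)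
      = AddMonoidAlgebra.single (α + β + γ - nu) (a * b * c * Mdet F α β γ) := by
  simp [bracket, AddMonoidAlgebra.coeff_single, Finsupp.sum_single_index]

end Bracket

lemma Mdet_half_eq (a b c l m n : ℤ) :
    Mdet F (hh 1, hh (2 * l), hh (2 * a)) (hh 1, hh (2 * m), hh (2 * b))
        (hh 1, hh (2 * n), hh (2 * c))
      = 1 / 2 * Matrix.det !![(a : F), b, c; 1, 1, 1; (l : F), m, n] := by
  simp only [Mdet, hh, Matrix.det_fin_three, Matrix.of_apply, Matrix.cons_val', Matrix.cons_val,
    Matrix.cons_val_fin_one]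
  push_cast
  ring

lemma Int.units_add_add_eq_neg_mul_or (u v w : ℤˣ) :
    (u + v + w : ℤ) = ((-(u * v * w) : ℤˣ) : ℤ) ∨ u = v ∧ v = w := by
  rcases Int.units_eq_one_or u with rfl | rfl <;> rcases Int.units_eq_one_or v with rfl | rfl <;>
    rcases Int.units_eq_one_or w with rfl | rfl <;> decide

lemma Int.negOnePow_add_add_sub_one (l m n : ℤ) :
    (l + m + n - 1).negOnePow = -(l.negOnePow * m.negOnePow * n.negOnePow) := by
  simp [Int.negOnePow_sub, Int.negOnePow_add]

lemma Matrix.det_fin_three_const_row_ones {R : Type*} [CommRing R] (x l m n : R) :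
    Matrix.det !![x, x, x; 1, 1, 1; l, m, n] = 0 := by
  simp [Matrix.det_fin_three]

lemma bracket_L_negOnePow (l m n : ℤ) :
    bracket F (L F (hh 1) (hh (2 * l)) (hh (2 * (l.negOnePow : ℤ))))
              (L F (hh 1) (hh (2 * m)) (hh (2 * (m.negOnePow : ℤ))))
              (L F (hh 1) (hh (2 * n)) (hh (2 * (n.negOnePow : ℤ))))
      = ((1 / 2 : F) *
            Matrix.det !![(((l.negOnePow : ℤ)) : F), (((m.negOnePow : ℤ)) : F),
                            (((n.negOnePow : ℤ)) : F);
                          1, 1, 1;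
                          (l : F), (m : F), (n : F)]) •
          L F (hh 1) (hh (2 * (l + m + n - 1)))
            (hh (2 * (((l + m + n - 1).negOnePow : ℤ)))) := by
  simp only [L, bracket_single, one_mul, Mdet_half_eq, AddMonoidAlgebra.smul_single', mul_one]
  rcases Int.units_add_add_eq_neg_mul_or l.negOnePow m.negOnePow n.negOnePow with hsum | ⟨hlm, hmn⟩
  · congr 1
    simp only [nu, Prod.mk_add_mk, Prod.mk_sub_mk, hh_add, hh_sub, Int.negOnePow_add_add_sub_one,
      ← hsum]
    congr 3 <;> ring
  · rw [hlm, hmn, Matrix.det_fin_three_const_row_ones]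
    simp

/-- for all `l, m, n ∈ ℤ`,
`[L_{1/2,l}^{(−1)^l}, L_{1/2,m}^{(−1)^m}, L_{1/2,n}^{(−1)^n}]
  = (1/2)·D·L_{1/2, l+m+n−1}^{(−1)^{l+m+n−1}}`, where `D` is the determinant of the
matrix with rows `((−1)^l, (−1)^m, (−1)^n)`, `(1,1,1)`, `(l,m,n)`.  Hence the
simple 3-Lie algebra `A_ω` embeds into `(A, [·,·,·])` via `U_r ↦ √2·L_{1/2,r}^{(−1)^r}`
when `F` contains `√2`. -/
theorem Aomega_embeds (l m n : ℤ) :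
    bracket F (L F (hh 1) (hh (2 * l)) (hh (2 * (l.negOnePow : ℤ))))
              (L F (hh 1) (hh (2 * m)) (hh (2 * (m.negOnePow : ℤ))))
              (L F (hh 1) (hh (2 * n)) (hh (2 * (n.negOnePow : ℤ))))
      = ((1 / 2 : F) *
            Matrix.det !![(((l.negOnePow : ℤ)) : F), (((m.negOnePow : ℤ)) : F),
                            (((n.negOnePow : ℤ)) : F);
                          1, 1, 1;
                          (l : F), (m : F), (n : F)]) •
          L F (hh 1) (hh (2 * (l + m + n - 1)))
            (hh (2 * (((l + m + n - 1).negOnePow : ℤ))))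
      ∧ ∀ s : F, s * s = 2 →
          bracket F (s • L F (hh 1) (hh (2 * l)) (hh (2 * (l.negOnePow : ℤ))))
                    (s • L F (hh 1) (hh (2 * m)) (hh (2 * (m.negOnePow : ℤ))))
                    (s • L F (hh 1) (hh (2 * n)) (hh (2 * (n.negOnePow : ℤ))))
            = (Matrix.det !![(((l.negOnePow : ℤ)) : F), (((m.negOnePow : ℤ)) : F),
                               (((n.negOnePow : ℤ)) : F);
                             1, 1, 1;
                             (l : F), (m : F), (n : F)]) •
                (s • L F (hh 1) (hh (2 * (l + m + n - 1)))
                  (hh (2 * (((l + m + n - 1).negOnePow : ℤ))))) := by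
  refine ⟨bracket_L_negOnePow F l m n, fun s hs => ?_⟩
  rw [bracket_smul, bracket_L_negOnePow, smul_smul, smul_smul]
  congr 1
  rw [hs]
  ring
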